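/- Let X, Y, W be independent random variables on a finite group G, J an independent {0,1}-random variable, and Z distributed as X^J Y^{1−J}. Suppose constants m, α satisfy: Pr(J=0)·Pr(Y=g) ≤ m for all g ∈ G, with equality Pr(J=0)·Pr(Y=g) = m for g ∈ supp(X); and ‖XW‖ ≤ α‖X‖ for some 0 < α ≤ 1. Let A = supp(X) and c = (1−α²)·(Pr(J=1))² / (m|A|·Pr(Z ∉ A) + 1). Then ‖ZW‖ ≤ √(1−c)·‖Z‖. -/

import Mathlib

/-!
Write `Z = p X + ν` with `ν = (1 - p) Pr(Y = ·)`. Since `ν ≤ m` everywhere with equality on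
`A = supp X`, we have `⟨X, ν⟩ = m` and `⟨XW, νW⟩ ≤ m`, while convolving with `W` does not increase
`‖ν‖`; expanding both squares gives `‖ZW‖² ≤ ‖Z‖² - (1 - α²) p² ‖X‖²`. It remains to compare
`‖X‖²` with `‖Z‖²`: on `A` we have `Z = p X + m`, off `A` we have `Z ≤ m`, and `|A| ‖X‖² ≥ 1` by
Cauchy–Schwarz; together with `Pr(Z ∉ A) = 1 - p - m |A|` this gives
`‖Z‖² ≤ ‖X‖² (m |A| Pr(Z ∉ A) + 1)`.
-/

open Finset

variable {G : Type*} [Fintype G] [Group G]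

/-- A probability mass function on a finite group. -/
def IsPMF (μ : G → ℝ) : Prop := (∀ g, 0 ≤ μ g) ∧ ∑ g, μ g = 1

/-- Distribution of the product of independent random variables. -/
noncomputable def conv (μ ν : G → ℝ) (g : G) : ℝ := ∑ h, μ h * ν (h⁻¹ * g)

/-- ℓ² norm of a distribution on a finite group. -/
noncomputable def l2norm (μ : G → ℝ) : ℝ := Real.sqrt (∑ g, μ g ^ 2)

theorem sum_inv_mul_right (ω : G → ℝ) (g : G) : ∑ h, ω (h⁻¹ * g) = ∑ h, ω h :=
  Equiv.sum_comp ((Equiv.inv G).trans (Equiv.mulRight g)) ω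

theorem sum_inv_mul_left (ω : G → ℝ) (h : G) : ∑ g, ω (h⁻¹ * g) = ∑ g, ω g :=
  Equiv.sum_comp (Equiv.mulLeft h⁻¹) ω

section Convolution

variable (μ ν ω : G → ℝ)

theorem conv_add_mul (p : ℝ) (g : G) :
    conv (fun g => p * μ g + ν g) ω g = p * conv μ ω g + conv ν ω g := by
  simp only [conv, add_mul, sum_add_distrib, mul_sum, mul_assoc]

theorem conv_nonneg (hμ : ∀ g, 0 ≤ μ g) (hω : ∀ g, 0 ≤ ω g) (g : G) : 0 ≤ conv μ ω g :=
  sum_nonneg fun h _ => mul_nonneg (hμ h) (hω _)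

theorem sum_conv (hω : ∑ g, ω g = 1) : ∑ g, conv μ ω g = ∑ g, μ g := by
  simp only [conv]
  rw [sum_comm]
  simp only [← mul_sum, sum_inv_mul_left, hω, mul_one]

theorem conv_le_of_le {m : ℝ} (hμ : ∀ g, μ g ≤ m) (hω : IsPMF ω) (g : G) : conv μ ω g ≤ m :=
  calc conv μ ω g ≤ ∑ h, m * ω (h⁻¹ * g) :=
        sum_le_sum fun h _ => mul_le_mul_of_nonneg_right (hμ h) (hω.1 _)
    _ = m := by rw [← mul_sum, sum_inv_mul_right, hω.2, mul_one]

theorem sum_conv_sq_le (hω : IsPMF ω) : ∑ g, conv μ ω g ^ 2 ≤ ∑ g, μ g ^ 2 := by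
  have jensen (g : G) : conv μ ω g ^ 2 ≤ ∑ h, ω (h⁻¹ * g) * μ h ^ 2 := by
    have := (even_two.convexOn_pow (𝕜 := ℝ)).map_sum_le (t := univ) (w := fun h => ω (h⁻¹ * g))
      (p := μ) (fun h _ => hω.1 _) (by rw [sum_inv_mul_right, hω.2]) (fun h _ => Set.mem_univ _)
    simpa only [conv, smul_eq_mul, mul_comm] using this
  calc ∑ g, conv μ ω g ^ 2 ≤ ∑ g, ∑ h, ω (h⁻¹ * g) * μ h ^ 2 := sum_le_sum fun g _ => jensen g
    _ = ∑ g, μ g ^ 2 := by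
      rw [sum_comm]
      simp only [← sum_mul, sum_inv_mul_left, hω.2, one_mul]

end Convolution

theorem sum_mul_add_sq {ι : Type*} [Fintype ι] (p : ℝ) (x y : ι → ℝ) :
    ∑ i, (p * x i + y i) ^ 2 = p ^ 2 * ∑ i, x i ^ 2 + 2 * p * ∑ i, x i * y i + ∑ i, y i ^ 2 := by
  simp only [add_sq, sum_add_distrib, mul_sum]
  congr 1; congr 1 <;> refine sum_congr rfl fun i _ => by ring

theorem sum_sq_conv_le_sub (μ ν ω : G → ℝ) (hμ : IsPMF μ) (hω : IsPMF ω) {p m a : ℝ}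
    (hp : 0 ≤ p) (hνm : ∀ g, ν g ≤ m) (heq : ∀ g, 0 < μ g → ν g = m)
    (hμω : ∑ g, conv μ ω g ^ 2 ≤ a * ∑ g, μ g ^ 2) :
    ∑ g, conv (fun g => p * μ g + ν g) ω g ^ 2 ≤
      ∑ g, (p * μ g + ν g) ^ 2 - (1 - a) * p ^ 2 * ∑ g, μ g ^ 2 := by
  have hcross : ∑ g, conv μ ω g * conv ν ω g ≤ m :=
    calc ∑ g, conv μ ω g * conv ν ω g ≤ ∑ g, conv μ ω g * m :=
          sum_le_sum fun g _ => mul_le_mul_of_nonneg_left (conv_le_of_le ν ω hνm hω g)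
            (conv_nonneg μ ω hμ.1 hω.1 g)
      _ = m := by rw [← sum_mul, sum_conv μ ω hω.2, hμ.2, one_mul]
  have hμν : ∑ g, μ g * ν g = m := by
    have (g : G) : μ g * ν g = μ g * m := by
      rcases (hμ.1 g).lt_or_eq with hg | hg
      · rw [heq g hg]
      · rw [← hg, zero_mul, zero_mul]
    rw [sum_congr rfl fun g _ => this g, ← sum_mul, hμ.2, one_mul]
  calc ∑ g, conv (fun g => p * μ g + ν g) ω g ^ 2
        = p ^ 2 * ∑ g, conv μ ω g ^ 2 + 2 * p * ∑ g, conv μ ω g * conv ν ω g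
            + ∑ g, conv ν ω g ^ 2 := by
          simp only [conv_add_mul]; exact sum_mul_add_sq p _ _
    _ ≤ p ^ 2 * (a * ∑ g, μ g ^ 2) + 2 * p * m + ∑ g, ν g ^ 2 := by
          have := sum_conv_sq_le ν ω hω
          gcongr p ^ 2 * ?_ + 2 * p * ?_ + ?_
    _ = _ := by rw [sum_mul_add_sq, hμν]; ring

open Classical in
theorem sum_sq_le_of_eq_on_support {ι : Type*} [Fintype ι] (μ ν : ι → ℝ) (hμ : IsPMF μ)
    {p m : ℝ} (hp : 0 ≤ p) (hν0 : ∀ i, 0 ≤ ν i) (hνm : ∀ i, ν i ≤ m)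
    (heq : ∀ i, 0 < μ i → ν i = m) (hsum : p + ∑ i, ν i = 1) :
    ∑ i, (p * μ i + ν i) ^ 2 ≤ (∑ i, μ i ^ 2) *
      (m * ((univ.filter fun i => 0 < μ i).card : ℝ) *
        (∑ i ∈ univ.filter fun i => ¬ 0 < μ i, (p * μ i + ν i)) + 1) := by
  obtain ⟨hμ0, hμ1⟩ := hμ
  set A := univ.filter fun i => 0 < μ i
  set B := univ.filter fun i => ¬ 0 < μ i
  set Z := fun i => p * μ i + ν i
  set E := ∑ i, μ i ^ 2
  set K : ℝ := (A.card : ℝ)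
  set Q := ∑ i ∈ B, Z i
  have hμA : ∑ i ∈ A, μ i = 1 :=
    (sum_filter_of_ne fun i _ hi => (hμ0 i).lt_of_ne' hi).trans hμ1
  have hμA2 : ∑ i ∈ A, μ i ^ 2 = E :=
    sum_filter_of_ne fun i _ hi => (hμ0 i).lt_of_ne' (pow_ne_zero_iff two_ne_zero |>.mp hi)
  have hEK : 1 ≤ E * K := by
    have := sq_sum_le_card_mul_sum_sq (s := A) (f := μ)
    rw [hμA, hμA2, one_pow, mul_comm] at this
    exact this
  have hZA : ∀ i ∈ A, Z i = p * μ i + m := fun i hi => by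
    simp only [Z, heq i (mem_filter.mp hi).2]
  have hZA1 : ∑ i ∈ A, Z i = p + m * K := by
    rw [sum_congr rfl hZA, sum_add_distrib, ← mul_sum, hμA, sum_const, nsmul_eq_mul]
    ring
  have hZA2 : ∑ i ∈ A, Z i ^ 2 = p ^ 2 * E + 2 * p * m + m ^ 2 * K := by
    simp only [sum_congr rfl fun i hi => congrArg (· ^ 2) (hZA i hi), add_sq, sum_add_distrib,
      mul_pow, ← mul_sum, ← sum_mul, hμA, hμA2, sum_const, nsmul_eq_mul, K]
    ring
  have hZB : ∀ i ∈ B, Z i = ν i := fun i hi => by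
    simp only [Z, le_antisymm (not_lt.mp (mem_filter.mp hi).2) (hμ0 i), mul_zero, zero_add]
  have hQ : Q = 1 - p - m * K := by
    have : ∑ i ∈ A, Z i + Q = 1 := by
      rw [sum_filter_add_sum_filter_not, ← hsum, sum_add_distrib, ← mul_sum, hμ1, mul_one]
    linarith
  have hQ0 : 0 ≤ Q := sum_nonneg fun i hi => hZB i hi ▸ hν0 i
  have hZB2 : ∑ i ∈ B, Z i ^ 2 ≤ m * Q := by
    rw [mul_sum]
    refine sum_le_sum fun i hi => ?_
    rw [hZB i hi, sq]
    exact mul_le_mul_of_nonneg_right (hνm i) (hν0 i)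
  obtain ⟨i, -, hi⟩ := exists_ne_zero_of_sum_ne_zero (hμ1.trans_ne one_ne_zero)
  have hm0 : 0 ≤ m := (hν0 i).trans (hνm i)
  have hE0 : 0 ≤ E := sum_nonneg fun i _ => sq_nonneg (μ i)
  have hK0 : 0 ≤ K := Nat.cast_nonneg _
  have hgap : 0 ≤ E * m * K * Q + (1 + p) * (E * Q + m * (E * K - 1)) := by
    have := sub_nonneg.mpr hEK
    positivity
  calc ∑ i, Z i ^ 2 = ∑ i ∈ A, Z i ^ 2 + ∑ i ∈ B, Z i ^ 2 := (sum_filter_add_sum_filter_not ..).symm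
    _ ≤ p ^ 2 * E + 2 * p * m + m ^ 2 * K + m * Q := by rw [hZA2]; linarith
    _ = E * (m * K * Q + 1) - (E * m * K * Q + (1 + p) * (E * Q + m * (E * K - 1))) := by
          rw [hQ]; ring
    _ ≤ E * (m * K * Q + 1) := sub_le_self _ hgap

theorem l2norm_le_sqrt_one_sub_div_mul {ι : Type*} [Fintype ι] {μ ν : ι → ℝ} {t E D : ℝ}
    (ht : 0 ≤ t) (hD : 0 < D)
    (hdrop : ∑ g, μ g ^ 2 ≤ ∑ g, ν g ^ 2 - t * E) (hν : ∑ g, ν g ^ 2 ≤ E * D) :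
    l2norm μ ≤ Real.sqrt (1 - t / D) * l2norm ν := by
  rw [l2norm, l2norm, ← Real.sqrt_mul' _ (sum_nonneg fun i _ => sq_nonneg (ν i))]
  refine Real.sqrt_le_sqrt ?_
  have : t / D * ∑ g, ν g ^ 2 ≤ t * E := by
    rw [div_mul_eq_mul_div, div_le_iff₀ hD, mul_assoc]
    exact mul_le_mul_of_nonneg_left hν ht
  linarith

open Classical in
/-- If Z ∼ X^J Y^{1−J} with p = Pr(J=1), Pr(J=0)Pr(Y=g) ≤ m with equality on
    A = supp(X), and ‖XW‖ ≤ α‖X‖, then ‖ZW‖ ≤ √(1−c)‖Z‖ for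
    c = (1−α²)p²/(m|A|·Pr(Z ∉ A) + 1). -/
theorem stmt18 (μX μY ω : G → ℝ) (hX : IsPMF μX) (hY : IsPMF μY) (hW : IsPMF ω)
    (p : ℝ) (hp0 : 0 ≤ p) (hp1 : p ≤ 1) (m α : ℝ) (hα0 : 0 < α) (hα1 : α ≤ 1)
    (hm : ∀ g, (1 - p) * μY g ≤ m)
    (heq : ∀ g, 0 < μX g → (1 - p) * μY g = m)
    (hXW : l2norm (conv μX ω) ≤ α * l2norm μX) :
    l2norm (conv (fun g => p * μX g + (1 - p) * μY g) ω) ≤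
      Real.sqrt (1 - (1 - α ^ 2) * p ^ 2 /
          (m * ((univ.filter fun g => 0 < μX g).card : ℝ) *
            (∑ g ∈ univ.filter fun g => ¬ 0 < μX g, (p * μX g + (1 - p) * μY g)) + 1)) *
        l2norm (fun g => p * μX g + (1 - p) * μY g) := by
  have hν0 (g : G) : 0 ≤ (1 - p) * μY g := mul_nonneg (sub_nonneg.mpr hp1) (hY.1 g)
  have hsum : p + ∑ g, (1 - p) * μY g = 1 := by rw [← mul_sum, hY.2]; ring
  have hXW2 : ∑ g, conv μX ω g ^ 2 ≤ α ^ 2 * ∑ g, μX g ^ 2 := by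
    have := pow_le_pow_left₀ (Real.sqrt_nonneg _) hXW 2
    unfold l2norm at this
    rwa [mul_pow, Real.sq_sqrt (sum_nonneg fun g _ => sq_nonneg _),
      Real.sq_sqrt (sum_nonneg fun g _ => sq_nonneg _)] at this
  have hm0 : 0 ≤ m := (hν0 1).trans (hm 1)
  have hQ0 : 0 ≤ ∑ g ∈ univ.filter fun g => ¬ 0 < μX g, (p * μX g + (1 - p) * μY g) :=
    sum_nonneg fun g _ => add_nonneg (mul_nonneg hp0 (hX.1 g)) (hν0 g)
  refine l2norm_le_sqrt_one_sub_div_mul ?_ (by positivity)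
    (sum_sq_conv_le_sub μX _ ω hX hW hp0 hm heq hXW2)
    (sum_sq_le_of_eq_on_support μX _ hX hp0 hν0 hm heq hsum)
  exact mul_nonneg (sub_nonneg.mpr (pow_le_one₀ hα0.le hα1)) (sq_nonneg p)
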